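/- arXiv:2405.17513 — 2 statements merged into one kernel-verified Lean document; each statement's English description precedes it below -/
import Mathlib

section
/- Let v^{(1)}, ..., v^{(r)} ∈ ℝ^r be r linearly independent vectors with ℓ¹-norm |v^{(ℓ)}|₁ ≤ M for each ℓ. Then for every w ∈ ℝ^r, max_{1 ≤ ℓ ≤ r} |w · v^{(ℓ)}| ≥ r^{−3/2} M^{1−r} |w|₂ · |det[v^{(1)}, ..., v^{(r)}]|. -/
open scoped BigOperators

-- column-sum Hadamard-type bound
lemma abs_det_le_col (n : ℕ) (A : Matrix (Fin n) (Fin n) ℝ) :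
    |A.det| ≤ ∏ j, ∑ i, |A i j| := by
  rw [Matrix.det_apply]
  calc |∑ σ : Equiv.Perm (Fin n), Equiv.Perm.sign σ • ∏ i, A (σ i) i|
      ≤ ∑ σ : Equiv.Perm (Fin n), |Equiv.Perm.sign σ • ∏ i, A (σ i) i| :=
        Finset.abs_sum_le_sum_abs _ _
    _ = ∑ σ : Equiv.Perm (Fin n), ∏ i, |A (σ i) i| := by
        refine Finset.sum_congr rfl fun σ _ => ?_
        rcases Int.units_eq_one_or (Equiv.Perm.sign σ) with h | h <;>
          simp [h, Finset.abs_prod]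
    _ ≤ ∑ f : Fin n → Fin n, ∏ i, |A (f i) i| := by
        have hinj : ∀ a ∈ (Finset.univ : Finset (Equiv.Perm (Fin n))),
            ∀ b ∈ (Finset.univ : Finset (Equiv.Perm (Fin n))),
            (⇑a : Fin n → Fin n) = ⇑b → a = b :=
          fun a _ b _ h => Equiv.coe_fn_injective h
        have him := Finset.sum_image
          (s := (Finset.univ : Finset (Equiv.Perm (Fin n))))
          (g := fun σ : Equiv.Perm (Fin n) => (⇑σ : Fin n → Fin n))
          (f := fun f : Fin n → Fin n => ∏ i, |A (f i) i|) hinj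
        rw [← him]
        exact Finset.sum_le_sum_of_subset_of_nonneg (Finset.subset_univ _)
          (fun f _ _ => Finset.prod_nonneg fun i _ => abs_nonneg _)
    _ = ∏ j, ∑ i, |A i j| := by
        rw [Finset.prod_univ_sum]
        simp

lemma abs_det_le_row (n : ℕ) (A : Matrix (Fin n) (Fin n) ℝ) :
    |A.det| ≤ ∏ i, ∑ j, |A i j| := by
  rw [← Matrix.det_transpose]
  exact abs_det_le_col n (Matrix.transpose A)

/-- Lemma on determinants (Lemma A.4, after Bourgain–Gambaudo–Gallavotti): if
`v⁽¹⁾, …, v⁽ʳ⁾ ∈ ℝʳ` are linearly independent with `|v⁽ℓ⁾|₁ ≤ M`, then for every `w`,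
`max_ℓ |w · v⁽ℓ⁾| ≥ r^{-3/2} M^{1-r} |w|₂ |det [v⁽ℓ⁾]|`. -/
theorem stmt3 (r : ℕ) (hr : 1 ≤ r) (M : ℝ) (v : Fin r → (Fin r → ℝ))
    (hind : LinearIndependent ℝ v)
    (hM : ∀ ℓ : Fin r, 0 < ∑ i, |v ℓ i| ∧ ∑ i, |v ℓ i| ≤ M)
    (w : Fin r → ℝ) :
    ∃ ℓ : Fin r,
      (r : ℝ) ^ (-(3 : ℝ) / 2) * M ^ ((1 : ℝ) - r) *
          Real.sqrt (∑ i, w i ^ 2) * |(Matrix.of v).det| ≤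
        |∑ i, w i * v ℓ i| := by
  haveI : Nonempty (Fin r) := ⟨⟨0, hr⟩⟩
  set A : Matrix (Fin r) (Fin r) ℝ := Matrix.of v with hA
  have hMpos : 0 < M := lt_of_lt_of_le (hM ⟨0, hr⟩).1 (hM ⟨0, hr⟩).2
  have hrpos : (0 : ℝ) < r := by exact_mod_cast hr
  -- adjugate entries are bounded by M ^ (r - 1)
  have hadj : ∀ i j, |A.adjugate i j| ≤ M ^ (r - 1) := by
    intro i j
    rw [Matrix.adjugate_apply]
    refine (abs_det_le_row r _).trans ?_
    have hrow : ∀ k, |(Pi.single i 1 : Fin r → ℝ) k| = if k = i then 1 else 0 := by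
      intro k; by_cases h : k = i <;> simp [Pi.single_apply, h]
    calc ∏ ℓ, ∑ k, |(A.updateRow j (Pi.single i (1:ℝ))) ℓ k|
        = (∑ k, |(A.updateRow j (Pi.single i 1)) j k|) *
            ∏ ℓ ∈ Finset.univ.erase j, ∑ k, |(A.updateRow j (Pi.single i 1)) ℓ k| :=
          (Finset.mul_prod_erase Finset.univ _ (Finset.mem_univ j)).symm
      _ = ∏ ℓ ∈ Finset.univ.erase j, ∑ k, |A ℓ k| := by
          rw [show (∑ k, |(A.updateRow j (Pi.single i 1)) j k|) = 1 by
            simp only [Matrix.updateRow_self]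
            simp [hrow]]
          rw [one_mul]
          refine Finset.prod_congr rfl fun ℓ hℓ => ?_
          rw [Matrix.updateRow_ne (Finset.ne_of_mem_erase hℓ)]
      _ ≤ ∏ ℓ ∈ Finset.univ.erase j, M := by
          refine Finset.prod_le_prod (fun ℓ _ => Finset.sum_nonneg fun k _ => abs_nonneg _)
            (fun ℓ _ => (hM ℓ).2)
      _ = M ^ (r - 1) := by
          rw [Finset.prod_const, Finset.card_erase_of_mem (Finset.mem_univ j),
            Finset.card_univ, Fintype.card_fin]
  -- pick maximizing ℓ
  set u : Fin r → ℝ := fun ℓ => ∑ i, w i * v ℓ i with hu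
  obtain ⟨ℓm, hℓm⟩ := Finite.exists_max fun ℓ => |u ℓ|
  refine ⟨ℓm, ?_⟩
  -- key identity: det A • w = adjugate A *ᵥ (A *ᵥ w)
  have hmul : ∀ i, A.det * w i = ∑ ℓ, A.adjugate i ℓ * u ℓ := by
    intro i
    have h1 : (A.adjugate).mulVec (A.mulVec w) = A.det • w := by
      rw [Matrix.mulVec_mulVec, Matrix.adjugate_mul, Matrix.smul_mulVec,
        Matrix.one_mulVec]
    have h2 := congrFun h1 i
    simp only [Matrix.mulVec, dotProduct, Pi.smul_apply, smul_eq_mul] at h2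
    rw [← h2]
    refine Finset.sum_congr rfl fun ℓ _ => ?_
    congr 1
    simp only [hu, hA, Matrix.of_apply]
    exact Finset.sum_congr rfl fun k _ => mul_comm _ _
  set C : ℝ := M ^ (r - 1) * ((r : ℝ) * |u ℓm|) with hC
  have hCnn : 0 ≤ C := by
    have : (0:ℝ) ≤ M ^ (r-1) := le_of_lt (pow_pos hMpos _)
    positivity
  have hbound : ∀ i, |A.det| * |w i| ≤ C := by
    intro i
    rw [← abs_mul, hmul i]
    calc |∑ ℓ, A.adjugate i ℓ * u ℓ| ≤ ∑ ℓ, |A.adjugate i ℓ * u ℓ| :=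
          Finset.abs_sum_le_sum_abs _ _
      _ ≤ ∑ ℓ : Fin r, M ^ (r - 1) * |u ℓm| := by
          refine Finset.sum_le_sum fun ℓ _ => ?_
          rw [abs_mul]
          exact mul_le_mul (hadj i ℓ) (hℓm ℓ) (abs_nonneg _)
            (le_of_lt (pow_pos hMpos _))
      _ = C := by
          rw [Finset.sum_const, Finset.card_univ, Fintype.card_fin, nsmul_eq_mul, hC]
          ring
  have hsum : |A.det| ^ 2 * ∑ i, w i ^ 2 ≤ (r : ℝ) * C ^ 2 := by
    rw [Finset.mul_sum]
    calc ∑ i, |A.det| ^ 2 * w i ^ 2 = ∑ i, (|A.det| * |w i|) ^ 2 := by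
          refine Finset.sum_congr rfl fun i _ => ?_
          rw [mul_pow, sq_abs, sq_abs]
      _ ≤ ∑ i : Fin r, C ^ 2 :=
          Finset.sum_le_sum fun i _ => pow_le_pow_left₀
            (mul_nonneg (abs_nonneg _) (abs_nonneg _)) (hbound i) 2
      _ = (r : ℝ) * C ^ 2 := by
          rw [Finset.sum_const, Finset.card_univ, Fintype.card_fin, nsmul_eq_mul]
  have hX : |A.det| * Real.sqrt (∑ i, w i ^ 2) ≤ Real.sqrt r * C := by
    have h1 := Real.sqrt_le_sqrt hsum
    rwa [Real.sqrt_mul (sq_nonneg _), Real.sqrt_sq (abs_nonneg _),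
      Real.sqrt_mul (le_of_lt hrpos), Real.sqrt_sq hCnn] at h1
  -- the constant computation
  have hconst : (r : ℝ) ^ (-(3 : ℝ) / 2) * M ^ ((1 : ℝ) - r) * (Real.sqrt r * C)
      = |u ℓm| := by
    rw [hC]
    have hM1 : M ^ ((1 : ℝ) - r) * M ^ (r - 1) = 1 := by
      rw [← Real.rpow_natCast M (r - 1), ← Real.rpow_add hMpos]
      rw [show ((1 : ℝ) - r) + ((r - 1 : ℕ) : ℝ) = 0 by
        rw [Nat.cast_sub hr]; push_cast; ring]
      exact Real.rpow_zero M
    have hr1 : (r : ℝ) ^ (-(3 : ℝ) / 2) * (Real.sqrt r * (r : ℝ)) = 1 := by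
      have h2 : (r : ℝ) ^ (-(3 : ℝ) / 2) * (r : ℝ) ^ ((1 : ℝ) / 2) * (r : ℝ) ^ (1 : ℝ)
          = 1 := by
        rw [← Real.rpow_add hrpos, ← Real.rpow_add hrpos]; norm_num
      calc (r : ℝ) ^ (-(3 : ℝ) / 2) * (Real.sqrt r * (r : ℝ))
          = (r : ℝ) ^ (-(3 : ℝ) / 2) * (r : ℝ) ^ ((1 : ℝ) / 2) * (r : ℝ) ^ (1 : ℝ) := by
            rw [Real.sqrt_eq_rpow, Real.rpow_one]; ring
        _ = 1 := h2
    calc (r : ℝ) ^ (-(3 : ℝ) / 2) * M ^ ((1 : ℝ) - r) *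
          (Real.sqrt r * (M ^ (r - 1) * ((r : ℝ) * |u ℓm|)))
        = ((r : ℝ) ^ (-(3 : ℝ) / 2) * (Real.sqrt r * (r : ℝ))) *
            (M ^ ((1 : ℝ) - r) * M ^ (r - 1)) * |u ℓm| := by ring
      _ = |u ℓm| := by rw [hM1, hr1]; ring
  have hconn : 0 ≤ (r : ℝ) ^ (-(3 : ℝ) / 2) * M ^ ((1 : ℝ) - r) :=
    mul_nonneg (Real.rpow_nonneg (le_of_lt hrpos) _)
      (Real.rpow_nonneg (le_of_lt hMpos) _)
  calc (r : ℝ) ^ (-(3 : ℝ) / 2) * M ^ ((1 : ℝ) - r) *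
        Real.sqrt (∑ i, w i ^ 2) * |A.det|
      = (r : ℝ) ^ (-(3 : ℝ) / 2) * M ^ ((1 : ℝ) - r) *
          (|A.det| * Real.sqrt (∑ i, w i ^ 2)) := by ring
    _ ≤ (r : ℝ) ^ (-(3 : ℝ) / 2) * M ^ ((1 : ℝ) - r) * (Real.sqrt r * C) :=
        mul_le_mul_of_nonneg_left hX hconn
    _ = |u ℓm| := hconst
end

section
/- Let b, d ≥ 1 and N ≥ 1. Let Λ ⊂ ℤ^{b+d} be either the cube [−N, N]^{b+d} ∩ ℤ^{b+d}, or the cube minus a 'corner' {x ∈ ℤ^{b+d} : x_i ⊓_i 0 for all i} where each ⊓_i ∈ {<, >, (no condition)} and at least two conditions are non-trivial. Write points of ℤ^{b+d} as (k, n) with k ∈ ℤ^b, n ∈ ℤ^d. Then for every k in the projection of Λ to ℤ^b, the section Λ(k) = {n ∈ ℤ^d : (k, n) ∈ Λ} is either (a) the cube [−N,N]^d ∩ ℤ^d, or (b) a cube of the same type as above in ℤ^d (a cube minus a corner with at least two non-trivial conditions), or (c) a rectangle (product of integer intervals) in ℤ^d each of whose side lengths is at least N. -/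
/-- The corner condition at one coordinate: `none` means no condition, `some true`
means `0 < z`, and `some false` means `z < 0`. -/
def cornerCond (o : Option Bool) (z : ℤ) : Prop :=
  match o with
  | none => True
  | some true => 0 < z
  | some false => z < 0

/-- Sections of elementary regions (Lemma B.5): if `Λ ⊂ ℤ^{b+d}` is either the cube
`[−N,N]^{b+d}` or the cube minus a corner with at least two non-trivial sign conditions,
then every section `Λ(k) = {n : (k,n) ∈ Λ}` is the cube `[−N,N]^d`, a cube minus a
corner (with at least two non-trivial conditions), or a rectangle all of whose side
lengths are at least `N`. -/
theorem stmt17 (b d N : ℕ) (hb : 1 ≤ b) (hd : 1 ≤ d) (hN : 1 ≤ N)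
    (Λ : Set ((Fin b → ℤ) × (Fin d → ℤ)))
    (hΛ : Λ = {p | (∀ i, |p.1 i| ≤ (N : ℤ)) ∧ ∀ j, |p.2 j| ≤ (N : ℤ)} ∨
      ∃ ι₁ : Fin b → Option Bool, ∃ ι₂ : Fin d → Option Bool,
        2 ≤ (Finset.univ.filter fun i => ι₁ i ≠ none).card +
            (Finset.univ.filter fun j => ι₂ j ≠ none).card ∧
        Λ = {p | (∀ i, |p.1 i| ≤ (N : ℤ)) ∧ ∀ j, |p.2 j| ≤ (N : ℤ)} \
            {p | (∀ i, cornerCond (ι₁ i) (p.1 i)) ∧ ∀ j, cornerCond (ι₂ j) (p.2 j)}) :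
    ∀ k : Fin b → ℤ, (∃ n, (k, n) ∈ Λ) →
      {n | (k, n) ∈ Λ} = {n : Fin d → ℤ | ∀ j, |n j| ≤ (N : ℤ)} ∨
      (∃ ι' : Fin d → Option Bool,
        2 ≤ (Finset.univ.filter fun j => ι' j ≠ none).card ∧
        {n | (k, n) ∈ Λ} =
          {n : Fin d → ℤ | ∀ j, |n j| ≤ (N : ℤ)} \
            {n | ∀ j, cornerCond (ι' j) (n j)}) ∨
      (∃ lo hi : Fin d → ℤ, (∀ j, (N : ℤ) ≤ hi j - lo j) ∧
        {n | (k, n) ∈ Λ} = {n : Fin d → ℤ | ∀ j, lo j ≤ n j ∧ n j ≤ hi j}) := by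
  intro k hk0
  obtain ⟨n₀, hn₀⟩ := hk0
  rcases hΛ with h | ⟨ι₁, ι₂, hcard, h⟩
  · subst h
    left
    ext n
    simp only [Set.mem_setOf_eq]
    exact ⟨fun h => h.2, fun h => ⟨hn₀.1, h⟩⟩
  · subst h
    have hkc : ∀ i, |k i| ≤ (N:ℤ) := hn₀.1.1
    by_cases hk1 : ∀ i, cornerCond (ι₁ i) (k i)
    · set S := Finset.univ.filter (fun j => ι₂ j ≠ none) with hS
      rcases lt_or_ge S.card 2 with hlt | hge
      · obtain hc0 | hc1 : S.card = 0 ∨ S.card = 1 := by omega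
        · -- all ι₂ trivial: contradiction with nonemptiness
          have hnone : ∀ j, ι₂ j = none := by
            intro j
            by_contra hj
            have : j ∈ S := by simp [hS, hj]
            rw [Finset.card_eq_zero.mp hc0] at this
            exact absurd this (Finset.notMem_empty j)
          exact absurd ⟨hk1, fun j => by rw [hnone j]; trivial⟩ hn₀.2
        · obtain ⟨j₀, hj₀⟩ := Finset.card_eq_one.mp hc1
          have hmem : ∀ j, ι₂ j ≠ none ↔ j = j₀ := by
            intro j
            rw [← Finset.mem_singleton, ← hj₀]
            simp [hS]
          have hj₀ne : ι₂ j₀ ≠ none := (hmem j₀).mpr rfl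
          have hother : ∀ j, j ≠ j₀ → ι₂ j = none := by
            intro j hj
            by_contra hc
            exact hj ((hmem j).mp hc)
          right; right
          match hb2 : ι₂ j₀ with
          | none => exact absurd hb2 hj₀ne
          | some true =>
            refine ⟨fun _ => -(N:ℤ), fun j => if j = j₀ then 0 else (N:ℤ), ?_, ?_⟩
            · intro j
              by_cases hj : j = j₀ <;> simp [hj] <;> omega
            · ext n
              simp only [Set.mem_setOf_eq, Set.mem_diff]
              constructor
              · rintro ⟨⟨_, hcube⟩, hnc⟩
                have hn2 : ¬ ∀ j, cornerCond (ι₂ j) (n j) := fun h => hnc ⟨hk1, h⟩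
                have hle : n j₀ ≤ 0 := by
                  by_contra hp
                  push_neg at hp
                  exact hn2 (fun j => by
                    by_cases hj : j = j₀
                    · subst hj; rw [hb2]; exact hp
                    · rw [hother j hj]; trivial)
                intro j
                by_cases hj : j = j₀
                · subst hj
                  exact ⟨(abs_le.mp (hcube j)).1, by rw [if_pos rfl]; exact hle⟩
                · exact ⟨(abs_le.mp (hcube j)).1, by rw [if_neg hj]; exact (abs_le.mp (hcube j)).2⟩
              · intro hr
                have hcube : ∀ j, |n j| ≤ (N:ℤ) := by
                  intro j
                  rw [abs_le]
                  refine ⟨(hr j).1, ?_⟩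
                  by_cases hj : j = j₀
                  · have := (hr j).2; rw [if_pos hj] at this; omega
                  · have := (hr j).2; rw [if_neg hj] at this; exact this
                refine ⟨⟨hkc, hcube⟩, ?_⟩
                rintro ⟨-, h2⟩
                have := h2 j₀
                rw [hb2] at this
                have h0 := (hr j₀).2
                rw [if_pos rfl] at h0
                exact absurd this (by simpa [cornerCond] using h0.not_gt)
          | some false =>
            refine ⟨fun j => if j = j₀ then 0 else -(N:ℤ), fun _ => (N:ℤ), ?_, ?_⟩
            · intro j
              by_cases hj : j = j₀ <;> simp [hj] <;> omega
            · ext n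
              simp only [Set.mem_setOf_eq, Set.mem_diff]
              constructor
              · rintro ⟨⟨_, hcube⟩, hnc⟩
                have hn2 : ¬ ∀ j, cornerCond (ι₂ j) (n j) := fun h => hnc ⟨hk1, h⟩
                have hle : 0 ≤ n j₀ := by
                  by_contra hp
                  push_neg at hp
                  exact hn2 (fun j => by
                    by_cases hj : j = j₀
                    · subst hj; rw [hb2]; exact hp
                    · rw [hother j hj]; trivial)
                intro j
                by_cases hj : j = j₀
                · subst hj
                  exact ⟨by rw [if_pos rfl]; exact hle, (abs_le.mp (hcube j)).2⟩
                · exact ⟨by rw [if_neg hj]; exact (abs_le.mp (hcube j)).1, (abs_le.mp (hcube j)).2⟩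
              · intro hr
                have hcube : ∀ j, |n j| ≤ (N:ℤ) := by
                  intro j
                  rw [abs_le]
                  refine ⟨?_, (hr j).2⟩
                  by_cases hj : j = j₀
                  · have := (hr j).1; rw [if_pos hj] at this; omega
                  · have := (hr j).1; rw [if_neg hj] at this; exact this
                refine ⟨⟨hkc, hcube⟩, ?_⟩
                rintro ⟨-, h2⟩
                have := h2 j₀
                rw [hb2] at this
                have h0 := (hr j₀).1
                rw [if_pos rfl] at h0
                exact absurd this (by simpa [cornerCond] using h0.not_gt)
      · right; left
        refine ⟨ι₂, hge, ?_⟩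
        ext n
        simp only [Set.mem_setOf_eq, Set.mem_diff]
        constructor
        · intro h
          exact ⟨h.1.2, fun h2 => h.2 ⟨hk1, h2⟩⟩
        · intro h
          exact ⟨⟨hkc, h.1⟩, fun hc => h.2 hc.2⟩
    · left
      ext n
      simp only [Set.mem_setOf_eq, Set.mem_diff]
      constructor
      · intro h
        exact h.1.2
      · intro h
        exact ⟨⟨hkc, h⟩, fun hc => hk1 hc.1⟩
end
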